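/- arXiv:2604.24656 — 2 statements merged into one kernel-verified Lean document; each statement's English description precedes it below -/
import Mathlib

section
/- Let H₁,…,H_m be i.i.d. nonnegative with E[H]=1, σ_H² := Var(H) < ∞, satisfying the small-ball condition P(H ≤ x) ≤ c·x^κ for x ∈ (0,1], and let Z = Σ H_k. Then for all sufficiently large m (in particular whenever c^m (1/2)^{mκ−1}/(mκ−1) ≤ 2/m and mκ > 1), E[1/Z] ≤ (4 + 64σ_H²)/m. -/
/-!
By the layer-cake formula, `E[1/Z] = ∫₀^∞ P(1/Z > t) dt`. Split the `t`-axis at `2/m` and `2`.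
On `(0, 2/m]` the integrand is at most `1`. On `(2/m, 2]` the event `1/Z > t` forces
`Z < m/2 = E[Z]/2`, which Chebyshev bounds by `4 Var Z / m² = 4 σ_H² / m`. On `(2, ∞)` it forces
`Z ≤ 1/t`, hence `H_k ≤ 1/t` for every `k`, and independence with the small-ball condition gives
`P(Z ≤ 1/t) ≤ c^m t^{-mκ}`, whose integral over `(2, ∞)` is the quantity assumed `≤ 2/m`.
-/

open MeasureTheory ProbabilityTheory Set

lemma setLIntegral_Ioi_le_of_le_rpow_neg {g : ℝ → ENNReal} {b C p : ℝ} (hb : 0 < b)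
    (hC : 0 ≤ C) (hp : 1 < p) (hg : ∀ t ∈ Ioi b, g t ≤ ENNReal.ofReal (C * t ^ (-p))) :
    ∫⁻ t in Ioi b, g t ≤ ENNReal.ofReal (C * (1 / b) ^ (p - 1) / (p - 1)) := by
  have hexp : -p < -1 := by linarith
  have hint : IntegrableOn (fun t ↦ C * t ^ (-p)) (Ioi b) :=
    (integrableOn_Ioi_rpow_of_lt hexp hb).const_mul C
  calc ∫⁻ t in Ioi b, g t ≤ ∫⁻ t in Ioi b, ENNReal.ofReal (C * t ^ (-p)) :=
        setLIntegral_mono' measurableSet_Ioi hg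
    _ = ENNReal.ofReal (∫ t in Ioi b, C * t ^ (-p)) := by
        rw [ofReal_integral_eq_lintegral_ofReal hint]
        filter_upwards [ae_restrict_mem measurableSet_Ioi] with t ht
        exact mul_nonneg hC (Real.rpow_nonneg (hb.trans ht).le _)
    _ = ENNReal.ofReal (C * (1 / b) ^ (p - 1) / (p - 1)) := by
        rw [integral_const_mul, integral_Ioi_rpow_of_lt hexp hb, one_div,
          Real.inv_rpow hb.le, ← Real.rpow_neg hb.le, show -p + 1 = -(p - 1) by ring,
          neg_div_neg_eq, mul_div_assoc]

lemma setOf_lt_inv_subset {Ω : Type*} (Z : Ω → ℝ) {t : ℝ} (ht : 0 < t) :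
    {ω | t < (Z ω)⁻¹} ⊆ {ω | Z ω < t⁻¹} := fun _ hω ↦
  (lt_inv_comm₀ ht (inv_pos.1 (ht.trans hω))).1 hω

section

variable {Ω : Type*} [MeasurableSpace Ω] {μ : Measure Ω}

lemma lintegral_ofReal_inv_le [IsProbabilityMeasure μ] {Z : Ω → ℝ} (hZ : Measurable Z)
    (hZ0 : ∀ ω, 0 ≤ Z ω) {a b q C p : ℝ} (ha : 0 < a) (hab : a ≤ b) (hq : 0 ≤ q) (hC : 0 ≤ C)
    (hp : 1 < p) (hbulk : μ {ω | Z ω < a⁻¹} ≤ ENNReal.ofReal q)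
    (hsmall : ∀ x, 0 < x → x < b⁻¹ → μ {ω | Z ω ≤ x} ≤ ENNReal.ofReal (C * x ^ p)) :
    ∫⁻ ω, ENNReal.ofReal (Z ω)⁻¹ ∂μ ≤
      ENNReal.ofReal (a + (b - a) * q + C * (1 / b) ^ (p - 1) / (p - 1)) := by
  have hb : 0 < b := ha.trans_le hab
  have hnear : ∫⁻ t in Ioc 0 a, μ {ω | t < (Z ω)⁻¹} ≤ ENNReal.ofReal a :=
    calc ∫⁻ t in Ioc 0 a, μ {ω | t < (Z ω)⁻¹} ≤ ∫⁻ _ in Ioc 0 a, 1 :=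
          setLIntegral_mono' measurableSet_Ioc fun _ _ ↦ prob_le_one
      _ = ENNReal.ofReal a := by simp [Real.volume_Ioc]
  have hmid : ∫⁻ t in Ioc a b, μ {ω | t < (Z ω)⁻¹} ≤ ENNReal.ofReal ((b - a) * q) :=
    calc ∫⁻ t in Ioc a b, μ {ω | t < (Z ω)⁻¹} ≤ ∫⁻ _ in Ioc a b, ENNReal.ofReal q :=
          setLIntegral_mono' measurableSet_Ioc fun t ht ↦ le_trans (measure_mono fun ω hω ↦
            (setOf_lt_inv_subset Z (ha.trans ht.1) hω).trans_le (inv_anti₀ ha ht.1.le)) hbulk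
      _ = ENNReal.ofReal ((b - a) * q) := by
          rw [setLIntegral_const, Real.volume_Ioc, ← ENNReal.ofReal_mul hq, mul_comm]
  have hfar : ∫⁻ t in Ioi b, μ {ω | t < (Z ω)⁻¹} ≤
      ENNReal.ofReal (C * (1 / b) ^ (p - 1) / (p - 1)) :=
    setLIntegral_Ioi_le_of_le_rpow_neg hb hC hp fun t ht ↦ by
      have ht0 : 0 < t := hb.trans ht
      rw [Real.rpow_neg ht0.le, ← Real.inv_rpow ht0.le]
      exact le_trans (measure_mono ((setOf_lt_inv_subset Z ht0).trans
        (ofPred_subset_ofPred.2 fun _ ↦ le_of_lt)))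
        (hsmall _ (inv_pos.2 ht0) (inv_strictAnti₀ hb ht))
  have hsplit : Ioi (0 : ℝ) = Ioc 0 a ∪ (Ioc a b ∪ Ioi b) := by
    rw [Ioc_union_Ioi_eq_Ioi hab, Ioc_union_Ioi_eq_Ioi ha.le]
  rw [lintegral_eq_lintegral_meas_lt μ (ae_of_all μ fun ω ↦ inv_nonneg.2 (hZ0 ω))
    hZ.inv.aemeasurable, hsplit, ENNReal.ofReal_add (by positivity) (by positivity),
    ENNReal.ofReal_add ha.le (by nlinarith), add_assoc]
  refine (lintegral_union_le _ _ _).trans (add_le_add hnear ?_)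
  exact (lintegral_union_le _ _ _).trans (add_le_add hmid hfar)

lemma measure_lt_half_integral_le [IsFiniteMeasure μ] {X : Ω → ℝ} (hX : MemLp X 2 μ)
    (hpos : 0 < μ[X]) :
    μ {ω | X ω < μ[X] / 2} ≤ ENNReal.ofReal (4 * variance X μ / μ[X] ^ 2) :=
  calc μ {ω | X ω < μ[X] / 2} ≤ μ {ω | μ[X] / 2 ≤ |X ω - μ[X]|} := measure_mono fun ω hω ↦ by
        rw [mem_ofPred_eq, abs_sub_comm]
        exact le_abs.2 (Or.inl (by linarith [hω.out]))
    _ ≤ ENNReal.ofReal (variance X μ / (μ[X] / 2) ^ 2) :=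
        meas_ge_le_variance_div_sq hX (by positivity)
    _ = ENNReal.ofReal (4 * variance X μ / μ[X] ^ 2) := by
        congr 1
        field_simp
        ring

end

namespace ProbabilityTheory

variable {Ω ι : Type*} [MeasurableSpace Ω] {μ : Measure Ω} [Fintype ι] {X : ι → Ω → ℝ}

lemma variance_sum_of_identDistrib [IsFiniteMeasure μ] (hX : ∀ i, MemLp (X i) 2 μ)
    (hindep : Pairwise fun i j ↦ X i ⟂ᵢ[μ] X j) {i₀ : ι}
    (hident : ∀ i, IdentDistrib (X i) (X i₀) μ μ) :
    variance (fun ω ↦ ∑ i, X i ω) μ = Fintype.card ι * variance (X i₀) μ := by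
  rw [← Finset.sum_fn, IndepFun.variance_sum (fun i _ ↦ hX i) fun i _ j _ hij ↦ hindep hij]
  simp [(hident _).variance_eq]

lemma iIndepFun.measure_sum_le_le_prod (hindep : iIndepFun X μ) (hX0 : ∀ i ω, 0 ≤ X i ω)
    (x : ℝ) : μ {ω | ∑ i, X i ω ≤ x} ≤ ∏ i, μ {ω | X i ω ≤ x} := by
  have hsub : {ω | ∑ i, X i ω ≤ x} ⊆ ⋂ i, X i ⁻¹' Iic x := fun ω hω ↦ mem_iInter.2 fun i ↦
    (Finset.single_le_sum (fun j _ ↦ hX0 j ω) (Finset.mem_univ i)).trans hω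
  exact (measure_mono hsub).trans_eq (hindep.meas_iInter fun i ↦ ⟨Iic x, measurableSet_Iic, rfl⟩)

lemma iIndepFun.measure_sum_le_le_rpow (hindep : iIndepFun X μ) (hX0 : ∀ i ω, 0 ≤ X i ω)
    {c κ x : ℝ} (hc : 0 ≤ c) (hx : 0 ≤ x)
    (hsb : ∀ i, μ {ω | X i ω ≤ x} ≤ ENNReal.ofReal (c * x ^ κ)) :
    μ {ω | ∑ i, X i ω ≤ x} ≤
      ENNReal.ofReal (c ^ Fintype.card ι * x ^ (Fintype.card ι * κ)) :=
  calc μ {ω | ∑ i, X i ω ≤ x} ≤ ∏ i, μ {ω | X i ω ≤ x} := hindep.measure_sum_le_le_prod hX0 x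
    _ ≤ ∏ _ : ι, ENNReal.ofReal (c * x ^ κ) := Finset.prod_le_prod' fun i _ ↦ hsb i
    _ = ENNReal.ofReal (c ^ Fintype.card ι * x ^ (Fintype.card ι * κ)) := by
      rw [Finset.prod_const, Finset.card_univ, ← ENNReal.ofReal_pow (by positivity), mul_pow,
        ← Real.rpow_natCast (x ^ κ), ← Real.rpow_mul hx, mul_comm κ]

lemma measure_sum_lt_half_le [IsFiniteMeasure μ] (hX : ∀ i, MemLp (X i) 2 μ)
    (hindep : Pairwise fun i j ↦ X i ⟂ᵢ[μ] X j) {i₀ : ι}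
    (hident : ∀ i, IdentDistrib (X i) (X i₀) μ μ) {a : ℝ} (ha : 0 < a)
    (hmean : ∀ i, μ[X i] = a) :
    μ {ω | ∑ i, X i ω < Fintype.card ι * a / 2} ≤
      ENNReal.ofReal (4 * variance (X i₀) μ / (Fintype.card ι * a ^ 2)) := by
  have hn : (0 : ℝ) < Fintype.card ι := by exact_mod_cast Fintype.card_pos_iff.2 ⟨i₀⟩
  have hZmean : μ[fun ω ↦ ∑ i, X i ω] = Fintype.card ι * a := by
    simp [integral_finsetSum _ fun i _ ↦ (hX i).integrable one_le_two, hmean]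
  have h := measure_lt_half_integral_le (memLp_finsetSum _ fun i _ ↦ hX i)
    (by rw [hZmean]; positivity)
  rw [hZmean, variance_sum_of_identDistrib hX hindep hident] at h
  refine h.trans_eq (congrArg _ ?_)
  field_simp

end ProbabilityTheory

theorem stmt11_general {Ω : Type*} [MeasurableSpace Ω] (μ : Measure Ω) [IsProbabilityMeasure μ]
    (m : ℕ) (hm : 0 < m) (H : Fin m → Ω → ℝ)
    (hmeas : ∀ i, Measurable (H i))
    (hindep : iIndepFun H μ)
    (hident : ∀ i j, μ.map (H i) = μ.map (H j))
    (hnn : ∀ i ω, 0 ≤ H i ω)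
    (hL2 : ∀ i, MemLp (H i) 2 μ)
    (hmean : ∀ i, ∫ ω, H i ω ∂μ = 1)
    (c κ : ℝ) (hc : 0 < c)
    (hsb : ∀ i, ∀ x : ℝ, 0 < x → x ≤ 1 → (μ {ω | H i ω ≤ x}).toReal ≤ c * x ^ κ)
    (hmκ : 1 < (m : ℝ) * κ)
    (hcond : c ^ m * (1 / 2 : ℝ) ^ ((m : ℝ) * κ - 1) / ((m : ℝ) * κ - 1) ≤ 2 / m) :
    ∫⁻ ω, ENNReal.ofReal (∑ i, H i ω)⁻¹ ∂μ ≤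
      ENNReal.ofReal ((4 + 64 * variance (H ⟨0, hm⟩) μ) / m) := by
  set σ2 := variance (H ⟨0, hm⟩) μ
  have hm1 : (1 : ℝ) ≤ m := by exact_mod_cast hm
  have hbulk : μ {ω | ∑ i, H i ω < (2 / (m : ℝ))⁻¹} ≤ ENNReal.ofReal (4 * σ2 / m) := by
    simpa [inv_div] using measure_sum_lt_half_le hL2 (fun i j hij ↦ hindep.indepFun hij)
      (fun i ↦ ⟨(hmeas i).aemeasurable, (hmeas _).aemeasurable, hident i ⟨0, hm⟩⟩) one_pos hmean
  have hsmall : ∀ x, 0 < x → x < (2 : ℝ)⁻¹ →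
      μ {ω | ∑ i, H i ω ≤ x} ≤ ENNReal.ofReal (c ^ m * x ^ ((m : ℝ) * κ)) := fun x hx hx2 ↦ by
    simpa using hindep.measure_sum_le_le_rpow hnn hc.le hx.le fun i ↦
      (ENNReal.le_ofReal_iff_toReal_le (measure_ne_top _ _) (by positivity)).2
        (hsb i x hx (by linarith))
  have hσ2 : 0 ≤ σ2 := variance_nonneg _ _
  calc ∫⁻ ω, ENNReal.ofReal (∑ i, H i ω)⁻¹ ∂μ ≤ ENNReal.ofReal (2 / m + (2 - 2 / m) * (4 * σ2 / m)
        + c ^ m * (1 / 2 : ℝ) ^ ((m : ℝ) * κ - 1) / ((m : ℝ) * κ - 1)) :=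
        lintegral_ofReal_inv_le (Finset.measurable_sum _ fun i _ ↦ hmeas i)
          (fun ω ↦ Finset.sum_nonneg fun i _ ↦ hnn i ω) (by positivity)
          (div_le_self zero_le_two hm1) (by positivity) (by positivity) hmκ hbulk hsmall
    _ ≤ ENNReal.ofReal ((4 + 64 * σ2) / m) := by
        refine ENNReal.ofReal_le_ofReal ?_
        have hmid : (2 - 2 / (m : ℝ)) * (4 * σ2 / m) ≤ 64 * σ2 / m := by
          rw [mul_div_assoc', div_le_div_iff_of_pos_right (by linarith)]
          nlinarith [show 0 ≤ 2 / (m : ℝ) by positivity]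
        linarith [add_div (4 : ℝ) (64 * σ2) m, add_div (2 : ℝ) 2 m]

theorem stmt11 {Ω : Type*} [MeasurableSpace Ω] (μ : Measure Ω) [IsProbabilityMeasure μ]
    (m : ℕ) (hm : 0 < m) (H : Fin m → Ω → ℝ)
    (hmeas : ∀ i, Measurable (H i))
    (hindep : iIndepFun H μ)
    (hident : ∀ i j, μ.map (H i) = μ.map (H j))
    (hnn : ∀ i ω, 0 ≤ H i ω)
    (hL2 : ∀ i, MemLp (H i) 2 μ)
    (hmean : ∀ i, ∫ ω, H i ω ∂μ = 1)
    (c κ : ℝ) (hc : 0 < c) (hκ : 0 < κ)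
    (hsb : ∀ i, ∀ x : ℝ, 0 < x → x ≤ 1 → (μ {ω | H i ω ≤ x}).toReal ≤ c * x ^ κ)
    (hmκ : 1 < (m : ℝ) * κ)
    (hcond : c ^ m * (1 / 2 : ℝ) ^ ((m : ℝ) * κ - 1) / ((m : ℝ) * κ - 1) ≤ 2 / m) :
    ∫⁻ ω, ENNReal.ofReal (∑ i, H i ω)⁻¹ ∂μ ≤
      ENNReal.ofReal ((4 + 64 * variance (H ⟨0, hm⟩) μ) / m) :=
  stmt11_general μ m hm H hmeas hindep hident hnn hL2 hmean c κ hc hsb hmκ hcond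
end

section
/- Under the thinning model: let S ≥ 0 with E[S] ≤ s₀, and I ≥ c₀·W where W = Σ_{k=1}^m δ_k H_k as above. Then for τ > 0, σ² > 0, P(S/(I+σ²) > τ) ≤ 4E[H²]/(qm) + 2s₀/(τ c₀ q m). In particular this upper bound tends to 0 whenever q·m → ∞. -/
/-!
On the event `W > E[W]/2` the interference term satisfies `I ≥ c₀ W > c₀ E[W]/2`, so
`S/(I + σ²) > τ` forces `S > τ c₀ E[W]/2`. Hence the event is covered by the lower tail
`W ≤ E[W]/2`, controlled by Chebyshev, and the upper tail of `S`, controlled by Markov.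
For the thinned sum `W = ∑ δₖ Hₖ` one has `E[W] = qm` and, by independence,
`Var W ≤ qm E[H²]`, which turns both bounds into `O(1/(qm))`.
-/

open MeasureTheory ProbabilityTheory
open scoped ENNReal

lemma setOf_lt_div_subset {Ω : Type*} {S I W : Ω → ℝ} {c₀ σ2 τ b : ℝ} (hc₀ : 0 < c₀)
    (hσ : 0 < σ2) (hτ : 0 < τ) (hInn : ∀ ω, 0 ≤ I ω)
    (hIW : ∀ ω, c₀ * W ω ≤ I ω) :
    {ω | τ < S ω / (I ω + σ2)} ⊆ {ω | W ω ≤ b} ∪ {ω | τ * (c₀ * b) ≤ S ω} := by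
  intro ω hω
  have hS : τ * (I ω + σ2) < S ω := (lt_div_iff₀ (by linarith [hInn ω])).mp hω
  rcases le_or_gt (W ω) b with hW | hW
  · exact Or.inl hW
  · right
    have : c₀ * b < I ω := (mul_lt_mul_of_pos_left hW hc₀).trans_le (hIW ω)
    show τ * (c₀ * b) ≤ S ω
    nlinarith

section

variable {Ω : Type*} [MeasurableSpace Ω] {μ : Measure Ω}

lemma memLp_mul_of_zero_or_one {p : ℝ≥0∞} {δ H : Ω → ℝ}
    (hδ : AEStronglyMeasurable δ μ) (h01 : ∀ ω, δ ω = 0 ∨ δ ω = 1) (hH : MemLp H p μ) :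
    MemLp (δ * H) p μ :=
  hH.of_le (hδ.mul hH.1) (.of_forall fun ω => by rcases h01 ω with h | h <;> simp [h])

lemma measureReal_le_half_integral_le [IsFiniteMeasure μ] {X : Ω → ℝ} (hX : MemLp X 2 μ)
    (hpos : 0 < μ[X]) : μ.real {ω | X ω ≤ μ[X] / 2} ≤ 4 * Var[X; μ] / μ[X] ^ 2 := by
  have hsub : {ω | X ω ≤ μ[X] / 2} ⊆ {ω | μ[X] / 2 ≤ |X ω - μ[X]|} :=
    fun ω (hω : X ω ≤ _) =>
    show _ ≤ |X ω - μ[X]| by rw [abs_sub_comm]; exact le_abs.mpr (Or.inl (by linarith))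
  calc μ.real {ω | X ω ≤ μ[X] / 2} ≤ μ.real {ω | μ[X] / 2 ≤ |X ω - μ[X]|} :=
        measureReal_mono hsub
    _ ≤ Var[X; μ] / (μ[X] / 2) ^ 2 :=
        ENNReal.toReal_le_of_le_ofReal (div_nonneg (variance_nonneg _ _) (by positivity))
          (meas_ge_le_variance_div_sq hX (by positivity))
    _ = 4 * Var[X; μ] / μ[X] ^ 2 := by field_simp; ring

lemma measureReal_ge_le_integral_div {f : Ω → ℝ} (hf_nonneg : 0 ≤ᵐ[μ] f)
    (hf_int : Integrable f μ) {ε : ℝ} (hε : 0 < ε) :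
    μ.real {ω | ε ≤ f ω} ≤ μ[f] / ε := by
  rw [le_div_iff₀ hε, mul_comm]
  exact mul_meas_ge_le_integral_of_nonneg hf_nonneg hf_int ε

theorem measureReal_lt_div_le [IsFiniteMeasure μ] {S I W : Ω → ℝ} {c₀ σ2 τ : ℝ}
    (hc₀ : 0 < c₀) (hσ : 0 < σ2) (hτ : 0 < τ) (hInn : ∀ ω, 0 ≤ I ω)
    (hIW : ∀ ω, c₀ * W ω ≤ I ω) (hSnn : ∀ ω, 0 ≤ S ω) (hSint : Integrable S μ)
    (hW : MemLp W 2 μ) (hWpos : 0 < μ[W]) :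
    μ.real {ω | τ < S ω / (I ω + σ2)} ≤
      4 * Var[W; μ] / μ[W] ^ 2 + 2 * μ[S] / (τ * c₀ * μ[W]) := by
  calc μ.real {ω | τ < S ω / (I ω + σ2)}
      ≤ μ.real ({ω | W ω ≤ μ[W] / 2} ∪ {ω | τ * (c₀ * (μ[W] / 2)) ≤ S ω}) :=
        measureReal_mono (setOf_lt_div_subset hc₀ hσ hτ hInn hIW)
    _ ≤ μ.real {ω | W ω ≤ μ[W] / 2} + μ.real {ω | τ * (c₀ * (μ[W] / 2)) ≤ S ω} :=
        measureReal_union_le _ _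
    _ ≤ 4 * Var[W; μ] / μ[W] ^ 2 + μ[S] / (τ * (c₀ * (μ[W] / 2))) :=
        add_le_add (measureReal_le_half_integral_le hW hWpos)
          (measureReal_ge_le_integral_div (.of_forall hSnn) hSint (by positivity))
    _ = 4 * Var[W; μ] / μ[W] ^ 2 + 2 * μ[S] / (τ * c₀ * μ[W]) := by field_simp

lemma integral_sum_mul_of_indepFun {ι : Type*} [Fintype ι] {δ H : ι → Ω → ℝ}
    (hδ : ∀ k, Measurable (δ k)) (hH : ∀ k, Measurable (H k))
    (h01 : ∀ k ω, δ k ω = 0 ∨ δ k ω = 1) (hHint : ∀ k, Integrable (H k) μ)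
    (hind : ∀ k, IndepFun (δ k) (H k) μ) :
    μ[∑ k, δ k * H k] = ∑ k, μ[δ k] * μ[H k] := by
  simp only [Finset.sum_apply]
  have hint : ∀ k, Integrable (δ k * H k) μ := fun k => memLp_one_iff_integrable.mp <|
    memLp_mul_of_zero_or_one (hδ k).aestronglyMeasurable (h01 k)
      (memLp_one_iff_integrable.mpr (hHint k))
  rw [integral_finsetSum _ fun k _ => hint k]
  exact Finset.sum_congr rfl fun k _ =>
    (hind k).integral_mul_eq_mul_integral (hδ k).aestronglyMeasurable (hH k).aestronglyMeasurable

lemma variance_mul_le_of_indepFun [IsProbabilityMeasure μ] {δ H : Ω → ℝ}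
    (hδ : Measurable δ) (hH : Measurable H)
    (h01 : ∀ ω, δ ω = 0 ∨ δ ω = 1) (hind : IndepFun δ H μ) :
    Var[δ * H; μ] ≤ μ[δ] * ∫ ω, H ω ^ 2 ∂μ := by
  have hind_sq : IndepFun δ (fun ω => H ω ^ 2) μ :=
    hind.comp measurable_id (measurable_id.pow_const 2)
  calc Var[δ * H; μ] ≤ μ[(δ * H) ^ 2] :=
        variance_le_expectation_sq (hδ.mul hH).aestronglyMeasurable
    _ = μ[δ * fun ω => H ω ^ 2] := by
        congr 1; funext ω; rcases h01 ω with h | h <;> simp [h]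
    _ = μ[δ] * ∫ ω, H ω ^ 2 ∂μ :=
        hind_sq.integral_mul_eq_mul_integral hδ.aestronglyMeasurable
          (hH.pow_const 2).aestronglyMeasurable

lemma variance_sum_mul_le [IsProbabilityMeasure μ] {ι : Type*} [Fintype ι]
    {δ H : ι → Ω → ℝ}
    (hδ : ∀ k, Measurable (δ k)) (hH : ∀ k, Measurable (H k))
    (h01 : ∀ k ω, δ k ω = 0 ∨ δ k ω = 1) (hHL2 : ∀ k, MemLp (H k) 2 μ)
    (hpairs : iIndepFun (fun k ω => (δ k ω, H k ω)) μ)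
    (hind : ∀ k, IndepFun (δ k) (H k) μ) :
    Var[∑ k, δ k * H k; μ] ≤ ∑ k, μ[δ k] * ∫ ω, H k ω ^ 2 ∂μ := by
  have hprod : iIndepFun (fun k => δ k * H k) μ :=
    hpairs.comp (fun _ p => p.1 * p.2) fun _ => measurable_fst.mul measurable_snd
  rw [IndepFun.variance_sum
    (fun k _ => memLp_mul_of_zero_or_one (hδ k).aestronglyMeasurable (h01 k) (hHL2 k))
    (fun i _ j _ hij => hprod.indepFun hij)]
  exact Finset.sum_le_sum fun k _ => variance_mul_le_of_indepFun (hδ k) (hH k) (h01 k) (hind k)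

end

theorem stmt14_general {Ω : Type*} [MeasurableSpace Ω] (μ : Measure Ω) [IsProbabilityMeasure μ]
    (m : ℕ) (hm : 0 < m) (q : ℝ) (hq0 : 0 < q)
    (δ H : Fin m → Ω → ℝ)
    (hδmeas : ∀ k, Measurable (δ k)) (hHmeas : ∀ k, Measurable (H k))
    (hδ01 : ∀ k ω, δ k ω = 0 ∨ δ k ω = 1)
    (hδq : ∀ k, ∫ ω, δ k ω ∂μ = q)
    (hHmean : ∀ k, ∫ ω, H k ω ∂μ = 1)
    (hHL2 : ∀ k, MemLp (H k) 2 μ)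
    (hpair_indep :
      iIndepFun (fun k ω => (δ k ω, H k ω)) μ)
    (hpair_ident : ∀ k l,
      μ.map (fun ω => (δ k ω, H k ω)) = μ.map (fun ω => (δ l ω, H l ω)))
    (hδH : ∀ k, IndepFun (δ k) (H k) μ)
    (S I : Ω → ℝ) (hSnn : ∀ ω, 0 ≤ S ω)
    (hSint : Integrable S μ)
    (s₀ c₀ σ2 τ : ℝ) (hs₀ : ∫ ω, S ω ∂μ ≤ s₀)
    (hc₀ : 0 < c₀) (hσ : 0 < σ2) (hτ : 0 < τ)
    (hInn : ∀ ω, 0 ≤ I ω)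
    (hIW : ∀ ω, c₀ * (∑ k, δ k ω * H k ω) ≤ I ω) :
    (μ {ω | τ < S ω / (I ω + σ2)}).toReal ≤
      4 * (∫ ω, (H ⟨0, hm⟩ ω) ^ 2 ∂μ) / (q * m) + 2 * s₀ / (τ * c₀ * q * m) ∧
    Filter.Tendsto
      (fun x : ℝ => 4 * (∫ ω, (H ⟨0, hm⟩ ω) ^ 2 ∂μ) / x + 2 * s₀ / (τ * c₀ * x))
      Filter.atTop (nhds 0) := by
  set E0 := ∫ ω, (H ⟨0, hm⟩ ω) ^ 2 ∂μ
  have hsecond : ∀ k, ∫ ω, H k ω ^ 2 ∂μ = E0 := fun k =>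
    ((IdentDistrib.mk ((hδmeas k).prodMk (hHmeas k)).aemeasurable
      ((hδmeas _).prodMk (hHmeas _)).aemeasurable (hpair_ident k ⟨0, hm⟩)).comp
        (measurable_snd.pow_const 2)).integral_eq
  have hmean : μ[∑ k, δ k * H k] = q * m := by
    rw [integral_sum_mul_of_indepFun hδmeas hHmeas hδ01
      (fun k => (hHL2 k).integrable one_le_two) hδH]
    simp [hδq, hHmean, mul_comm]
  have hvar : Var[∑ k, δ k * H k; μ] ≤ q * m * E0 := by
    refine (variance_sum_mul_le hδmeas hHmeas hδ01 hHL2 hpair_indep hδH).trans_eq ?_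
    simp [hδq, hsecond]
    ring
  have hWL2 : MemLp (∑ k, δ k * H k) 2 μ := memLp_finsetSum' _ fun k _ =>
    memLp_mul_of_zero_or_one (hδmeas k).aestronglyMeasurable (hδ01 k) (hHL2 k)
  have hqm : 0 < q * m := by positivity
  refine ⟨?_, ?_⟩
  · calc μ.real {ω | τ < S ω / (I ω + σ2)}
        ≤ 4 * Var[∑ k, δ k * H k; μ] / μ[∑ k, δ k * H k] ^ 2
          + 2 * μ[S] / (τ * c₀ * μ[∑ k, δ k * H k]) :=
          measureReal_lt_div_le hc₀ hσ hτ hInn (fun ω => by simpa using hIW ω) hSnn hSint hWL2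
            (hmean ▸ hqm)
      _ ≤ 4 * (q * m * E0) / (q * m) ^ 2 + 2 * s₀ / (τ * c₀ * (q * m)) := by
          rw [hmean]; gcongr
      _ = 4 * E0 / (q * m) + 2 * s₀ / (τ * c₀ * q * m) := by
          field_simp
  · simpa using (tendsto_const_nhds.div_atTop Filter.tendsto_id).add
      (tendsto_const_nhds.div_atTop
        (Filter.tendsto_id.const_mul_atTop (by positivity : 0 < τ * c₀)))

theorem stmt14 {Ω : Type*} [MeasurableSpace Ω] (μ : Measure Ω) [IsProbabilityMeasure μ]
    (m : ℕ) (hm : 0 < m) (q : ℝ) (hq0 : 0 < q) (hq1 : q ≤ 1)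
    (δ H : Fin m → Ω → ℝ)
    (hδmeas : ∀ k, Measurable (δ k)) (hHmeas : ∀ k, Measurable (H k))
    (hδ01 : ∀ k ω, δ k ω = 0 ∨ δ k ω = 1)
    (hδq : ∀ k, ∫ ω, δ k ω ∂μ = q)
    (hnn : ∀ k ω, 0 ≤ H k ω)
    (hHmean : ∀ k, ∫ ω, H k ω ∂μ = 1)
    (hHL2 : ∀ k, MemLp (H k) 2 μ)
    (hpair_indep :
      iIndepFun (fun k ω => (δ k ω, H k ω)) μ)
    (hpair_ident : ∀ k l,
      μ.map (fun ω => (δ k ω, H k ω)) = μ.map (fun ω => (δ l ω, H l ω)))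
    (hδH : ∀ k, IndepFun (δ k) (H k) μ)
    (S I : Ω → ℝ) (hSmeas : Measurable S) (hSnn : ∀ ω, 0 ≤ S ω)
    (hSint : Integrable S μ)
    (s₀ c₀ σ2 τ : ℝ) (hs₀ : ∫ ω, S ω ∂μ ≤ s₀)
    (hc₀ : 0 < c₀) (hσ : 0 < σ2) (hτ : 0 < τ)
    (hInn : ∀ ω, 0 ≤ I ω)
    (hIW : ∀ ω, c₀ * (∑ k, δ k ω * H k ω) ≤ I ω) :
    (μ {ω | τ < S ω / (I ω + σ2)}).toReal ≤
      4 * (∫ ω, (H ⟨0, hm⟩ ω) ^ 2 ∂μ) / (q * m) + 2 * s₀ / (τ * c₀ * q * m) ∧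
    Filter.Tendsto
      (fun x : ℝ => 4 * (∫ ω, (H ⟨0, hm⟩ ω) ^ 2 ∂μ) / x + 2 * s₀ / (τ * c₀ * x))
      Filter.atTop (nhds 0) :=
  stmt14_general μ m hm q hq0 δ H hδmeas hHmeas hδ01 hδq hHmean hHL2 hpair_indep hpair_ident hδH S I
    hSnn hSint s₀ c₀ σ2 τ hs₀ hc₀ hσ hτ hInn hIW
end
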